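/- arXiv:1803.06583 — 3 statements merged into one kernel-verified Lean document; each statement's English description precedes it below -/
import Mathlib

section
/- Let a group G act ultrahomogeneously on an infinite circularly ordered set X. Let F ⊆ X be a finite subset, and let t, t' ∈ F be distinct elements such that the open interval (t,t') = {x : [t,x,t']} contains no element of F. Then for every x ∈ (t,t'), the orbit of x under the pointwise stabilizer V_F = { g ∈ G : g s = s for all s ∈ F } is exactly the interval (t,t'); that is, { g x : g ∈ V_F } = (t,t'). -/
/-- An action of a group `G` on a circularly ordered set `X` is ultrahomogeneous if it is
effective, every `g ∈ G` preserves the circular order, and every c-order isomorphism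
between two finite subsets of `X` extends to an element of `G`. -/
def IsUltrahomogeneous (G X : Type*) [Group G] [CircularOrder X] [MulAction G X] : Prop :=
  (∀ g : G, (∀ x : X, g • x = x) → g = 1) ∧
  (∀ (g : G) (a b c : X), sbtw a b c → sbtw (g • a) (g • b) (g • c)) ∧
  (∀ (A B : Finset X) (φ : X → X), Set.BijOn φ (↑A : Set X) (↑B : Set X) →
    (∀ a ∈ A, ∀ b ∈ A, ∀ c ∈ A, (sbtw a b c ↔ sbtw (φ a) (φ b) (φ c))) →
    ∃ g : G, ∀ a ∈ A, g • a = φ a)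

section aux

variable {α : Type*} [CircularOrder α]

lemma sbtw_ne₁ {a b c : α} (h : sbtw a b c) : a ≠ b := by
  rintro rfl; exact sbtw_irrefl_left h

lemma sbtw_ne₂ {a b c : α} (h : sbtw a b c) : b ≠ c := by
  rintro rfl; exact sbtw_irrefl_right h

lemma sbtw_ne₃ {a b c : α} (h : sbtw a b c) : a ≠ c := by
  rintro rfl; exact sbtw_irrefl_left_right h

lemma sbtw_total' {u v w : α} (h1 : u ≠ v) (h2 : v ≠ w) (h3 : u ≠ w) :
    sbtw u v w ∨ sbtw w v u := by
  by_cases hb : btw u v w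
  · by_cases hb' : btw w v u
    · rcases btw_antisymm hb hb' with e | e | e
      · exact absurd e h1
      · exact absurd e h2
      · exact absurd e.symm h3
    · exact Or.inl (hb.sbtw_of_not_btw hb')
  · exact Or.inr (sbtw_iff_not_btw.2 hb)

/-- Two points strictly between `t` and `t'` sit identically relative to any points
outside the open interval `(t,t')`. -/
lemma sbtw_key {t t' a c x y : α} (hx : sbtw t x t') (hy : sbtw t y t')
    (ha : ¬ sbtw t a t') (hc : ¬ sbtw t c t') (h : sbtw a x c) : sbtw a y c := by
  have A1 : a = t ∨ sbtw a t x := by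
    by_cases e : a = t
    · exact Or.inl e
    · rcases sbtw_total' e (sbtw_ne₁ hx) (sbtw_ne₁ h) with h' | h'
      · exact Or.inr h'
      · exact absurd (h'.cyclic_left.trans_right hx) ha
  have A2 : t' = c ∨ sbtw x t' c := by
    by_cases e : t' = c
    · exact Or.inl e
    · rcases sbtw_total' (sbtw_ne₂ hx) e (sbtw_ne₂ h) with h' | h'
      · exact Or.inr h'
      · exact absurd (hx.trans_left h'.cyclic_right) hc
  rcases A1 with rfl | hat
  · rcases A2 with rfl | ht'c
    · exact hy
    · exact hy.trans_right (h.trans_left ht'c)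
  · have hatc : sbtw a t c := hat.trans_right h
    rcases A2 with rfl | ht'c
    · exact hatc.trans_left hy
    · have httc : sbtw t t' c := by
        rcases sbtw_total' (sbtw_ne₃ hx) (sbtw_ne₂ ht'c) (sbtw_ne₂ hatc) with h' | h'
        · exact h'
        · exact absurd h'.cyclic_right hc
      exact hatc.trans_left (hy.trans_right httc)

lemma sbtw_key_iff {t t' a c x y : α} (hx : sbtw t x t') (hy : sbtw t y t')
    (ha : ¬ sbtw t a t') (hc : ¬ sbtw t c t') : sbtw a x c ↔ sbtw a y c :=
  ⟨sbtw_key hx hy ha hc, sbtw_key hy hx ha hc⟩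

end aux

/-- Let `G` act ultrahomogeneously on an infinite circularly ordered set `X`, let `F ⊆ X`
be finite and let `t ≠ t'` in `F` be such that the open interval `(t,t')` misses `F`.
Then for every `x ∈ (t,t')`, the orbit of `x` under the pointwise stabilizer
`V_F = {g : g s = s ∀ s ∈ F}` is exactly the interval `(t,t')`. -/
theorem stmt9 {G X : Type*} [Group G] [CircularOrder X] [MulAction G X] [Infinite X]
    (h : IsUltrahomogeneous G X) (F : Finset X) (t t' : X)
    (htF : t ∈ F) (ht'F : t' ∈ F) (htt' : t ≠ t')
    (hmiss : ∀ s ∈ F, ¬ sbtw t s t') :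
    ∀ x : X, sbtw t x t' →
      {y : X | ∃ g : G, (∀ s ∈ F, g • s = s) ∧ g • x = y} = {y : X | sbtw t y t'} := by
  classical
  intro x hx
  have hxF : x ∉ F := fun hxF => hmiss x hxF hx
  ext y
  simp only [Set.mem_setOf_eq]
  constructor
  · rintro ⟨g, hgF, rfl⟩
    have := h.2.1 g t x t' hx
    rwa [hgF t htF, hgF t' ht'F] at this
  · intro hy
    by_cases hxy : x = y
    · exact ⟨1, fun s _ => one_smul G s, by rw [one_smul, hxy]⟩
    have hyF : y ∉ F := fun hyF => hmiss y hyF hy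
    set φ : X → X := fun z => if z = x then y else z with hφ
    have hφx : φ x = y := by simp [hφ]
    have hφF : ∀ s ∈ F, φ s = s := fun s hs => by
      simp only [hφ]; rw [if_neg]; rintro rfl; exact hxF hs
    have hbij : Set.BijOn φ (↑(insert x F) : Set X) (↑(insert y F) : Set X) := by
      refine ⟨?_, ?_, ?_⟩
      · intro a ha
        simp only [Finset.coe_insert, Set.mem_insert_iff, Finset.mem_coe] at ha ⊢
        rcases ha with rfl | haF
        · exact Or.inl hφx
        · rw [hφF a haF]; exact Or.inr haF
      · intro a ha b hb hab
        simp only [Finset.coe_insert, Set.mem_insert_iff, Finset.mem_coe] at ha hb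
        rcases ha with rfl | haF <;> rcases hb with rfl | hbF
        · rfl
        · rw [hφx, hφF b hbF] at hab; exact absurd (hab ▸ hbF) hyF
        · rw [hφx, hφF a haF] at hab; exact absurd (hab ▸ haF) hyF
        · rwa [hφF a haF, hφF b hbF] at hab
      · intro b hb
        simp only [Finset.coe_insert, Set.mem_insert_iff, Finset.mem_coe] at hb
        rcases hb with rfl | hbF
        · exact ⟨x, by simp [Finset.coe_insert], hφx⟩
        · exact ⟨b, by simp [Finset.coe_insert, hbF], hφF b hbF⟩
    have hiso : ∀ a ∈ insert x F, ∀ b ∈ insert x F, ∀ c ∈ insert x F,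
        (sbtw a b c ↔ sbtw (φ a) (φ b) (φ c)) := by
      intro a ha b hb c hc
      rcases Finset.mem_insert.1 ha with rfl | haF <;>
        rcases Finset.mem_insert.1 hb with rfl | hbF <;>
        rcases Finset.mem_insert.1 hc with rfl | hcF
      · simp [hφx, sbtw_irrefl]
      · rw [hφx, hφF c hcF]
        exact iff_of_false sbtw_irrefl_left sbtw_irrefl_left
      · rw [hφx, hφF b hbF]
        exact iff_of_false sbtw_irrefl_left_right sbtw_irrefl_left_right
      · -- a = x, b c ∈ F
        rw [hφx, hφF b hbF, hφF c hcF, sbtw_cyclic,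
          sbtw_key_iff hx hy (hmiss c hcF) (hmiss b hbF), ← sbtw_cyclic]
      · rw [hφx, hφF a haF]
        exact iff_of_false sbtw_irrefl_right sbtw_irrefl_right
      · -- b = x, a c ∈ F
        rw [hφx, hφF a haF, hφF c hcF,
          sbtw_key_iff hx hy (hmiss a haF) (hmiss c hcF)]
      · -- c = x, a b ∈ F
        rw [hφx, hφF a haF, hφF b hbF, sbtw_cyclic, sbtw_cyclic,
          sbtw_key_iff hx hy (hmiss b hbF) (hmiss a haF), ← sbtw_cyclic, ← sbtw_cyclic]
      · rw [hφF a haF, hφF b hbF, hφF c hcF]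
    obtain ⟨g, hg⟩ := h.2.2 (insert x F) (insert y F) φ hbij hiso
    refine ⟨g, fun s hs => ?_, ?_⟩
    · rw [hg s (Finset.mem_insert_of_mem hs), hφF s hs]
    · rw [hg x (Finset.mem_insert_self x F), hφx]
end

section
/- Let a group G act ultrahomogeneously on an infinite circularly ordered set X, and let F ⊆ X be a finite nonempty subset with |F| = m. Then the action of the pointwise stabilizer V_F = { g ∈ G : g s = s for all s ∈ F } on X has only finitely many orbits; in fact at most 2m orbits (the m points of F and the m open intervals between consecutive points of F). -/
/-- Totality of the strict circular betweenness on distinct points. -/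
lemma sbtw_total'_s10 {X : Type*} [CircularOrder X] {a b c : X}
    (hab : a ≠ b) (hbc : b ≠ c) (hca : c ≠ a) : sbtw a b c ∨ sbtw c b a := by
  rcases btw_total a b c with h1 | h1
  · by_cases h2 : btw c b a
    · rcases btw_antisymm h1 h2 with h | h | h <;> simp_all
    · exact Or.inl (sbtw_of_btw_not_btw h1 h2)
  · by_cases h2 : btw a b c
    · rcases btw_antisymm h2 h1 with h | h | h <;> simp_all
    · exact Or.inr (sbtw_of_btw_not_btw h1 h2)

/-- Every `x ∉ F` has a "successor" in the nonempty finite set `F`: an element `a ∈ F`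
with no element of `F` strictly between `x` and `a`. -/
lemma exists_succ {X : Type*} [CircularOrder X] (F : Finset X) (hF : F.Nonempty) (x : X) :
    ∃ a ∈ F, ∀ b ∈ F, ¬ sbtw x b a := by
  classical
  induction F using Finset.induction with
  | empty => exact absurd hF (by simp)
  | @insert d F' hd ih =>
    rcases Finset.eq_empty_or_nonempty F' with rfl | hF'
    · exact ⟨d, by simp, by simp [sbtw_irrefl_right]⟩
    · obtain ⟨a', ha'F, ha'⟩ := ih hF'
      by_cases hda : sbtw x d a'
      · refine ⟨d, by simp, ?_⟩
        intro b hb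
        rcases Finset.mem_insert.1 hb with rfl | hb
        · exact sbtw_irrefl_right
        · exact fun hbd => ha' b hb (hbd.trans_right hda)
      · refine ⟨a', Finset.mem_insert_of_mem ha'F, ?_⟩
        intro b hb
        rcases Finset.mem_insert.1 hb with rfl | hb
        · exact hda
        · exact ha' b hb

/-- Two points outside `F` with the same successor in `F` have the same betweenness
pattern with respect to `F`. -/
lemma key_sbtw {X : Type*} [CircularOrder X] {F : Finset X} {a x y : X}
    (ha : a ∈ F) (hx : x ∉ F) (hy : y ∉ F)
    (hxa : ∀ b ∈ F, ¬ sbtw x b a) (hya : ∀ b ∈ F, ¬ sbtw y b a)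
    {b c : X} (hb : b ∈ F) (hc : c ∈ F) (hbxc : sbtw b x c) : sbtw b y c := by
  by_cases hxy : y = x
  · rwa [hxy]
  have hxb : x ≠ b := fun h => hx (h ▸ hb)
  have hxc : x ≠ c := fun h => hx (h ▸ hc)
  have hxa' : x ≠ a := fun h => hx (h ▸ ha)
  have hyb : y ≠ b := fun h => hy (h ▸ hb)
  have hyc : y ≠ c := fun h => hy (h ▸ hc)
  have hya' : y ≠ a := fun h => hy (h ▸ ha)
  have hbc : b ≠ c := by rintro rfl; exact sbtw_irrefl_left_right hbxc
  by_contra hcon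
  have hcyb : sbtw c y b := by
    rcases sbtw_total'_s10 hyb.symm hyc hbc.symm with h1 | h1
    · exact absurd h1 hcon
    · exact h1
  by_cases hca : c = a
  · subst hca
    exact hya b hb hcyb.cyclic_left
  · -- c ≠ a, so from ¬ sbtw x c a we get sbtw x a c
    have hxac : sbtw x a c := by
      rcases sbtw_total'_s10 hxc hca hxa'.symm with h1 | h1
      · exact absurd h1 (hxa c hc)
      · exact h1.cyclic_left.cyclic_left
    by_cases hba : b = a
    · subst hba
      exact hbxc.cyclic_left.not_btw hxac.cyclic_left.btw
    · -- b ≠ a, so from ¬ sbtw y b a we get sbtw y a b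
      have hyab : sbtw y a b := by
        rcases sbtw_total'_s10 hyb hba hya'.symm with h1 | h1
        · exact absurd h1 (hya b hb)
        · exact h1.cyclic_left.cyclic_left
      have h1 : sbtw c a b := hcyb.trans_left hyab
      have h2 : sbtw b a c := hbxc.trans_left hxac
      exact h2.not_btw h1.btw

/-- Let `G` act ultrahomogeneously on an infinite circularly ordered set `X` and let
`F ⊆ X` be finite and nonempty with `|F| = m`. Then the pointwise stabilizer
`V_F = {g : g s = s ∀ s ∈ F}` has finitely many orbits on `X`: at most `2m` of them
(witnessed by at most `2m` representatives whose `V_F`-orbits cover `X`). -/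
theorem stmt10 {G X : Type*} [Group G] [CircularOrder X] [MulAction G X] [Infinite X]
    (h : IsUltrahomogeneous G X) (F : Finset X) (hF : F.Nonempty) :
    ∃ S : Finset X, S.card ≤ 2 * F.card ∧
      ∀ x : X, ∃ s ∈ S, ∃ g : G, (∀ t ∈ F, g • t = t) ∧ g • s = x := by
  classical
  obtain ⟨-, -, hext⟩ := h
  -- For each `a ∈ F` pick, if possible, a representative outside `F` with successor `a`.
  set P : X → X → Prop := fun a z => z ∉ F ∧ ∀ b ∈ F, ¬ sbtw z b a with hP
  set f : X → X := fun a => if hpa : ∃ z, P a z then hpa.choose else a with hf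
  refine ⟨F ∪ F.image f, ?_, ?_⟩
  · calc (F ∪ F.image f).card ≤ F.card + (F.image f).card := Finset.card_union_le _ _
      _ ≤ F.card + F.card := by
          exact Nat.add_le_add_left (Finset.card_image_le) _
      _ = 2 * F.card := by ring
  · intro x
    by_cases hxF : x ∈ F
    · exact ⟨x, Finset.mem_union_left _ hxF, 1, by simp, by simp⟩
    · obtain ⟨a, haF, hsucc⟩ := exists_succ F hF x
      have hpa : ∃ z, P a z := ⟨x, hxF, hsucc⟩
      have hy : P a (f a) := by
        simpa [hf, dif_pos hpa] using hpa.choose_spec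
      set y := f a with hyd
      obtain ⟨hyF, hysucc⟩ := hy
      refine ⟨y, Finset.mem_union_right _ (Finset.mem_image_of_mem f haF), ?_⟩
      -- the φ fixing F and sending y to x
      set φ : X → X := fun z => if z = y then x else z with hφ
      have hφy : φ y = x := by simp [hφ]
      have hφF : ∀ b ∈ F, φ b = b := by
        intro b hb
        have : b ≠ y := fun h => hyF (h ▸ hb)
        simp [hφ, this]
      have hbij : Set.BijOn φ (↑(insert y F) : Set X) (↑(insert x F) : Set X) := by
        refine ⟨?_, ?_, ?_⟩
        · intro z hz
          simp only [Finset.coe_insert, Set.mem_insert_iff, Finset.mem_coe] at hz ⊢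
          rcases hz with rfl | hz
          · left; exact hφy
          · right; rwa [hφF z hz]
        · intro z1 h1 z2 h2 he
          simp only [Finset.coe_insert, Set.mem_insert_iff, Finset.mem_coe] at h1 h2
          rcases h1 with rfl | h1 <;> rcases h2 with rfl | h2
          · rfl
          · rw [hφy, hφF z2 h2] at he; exact absurd (he ▸ h2) hxF
          · rw [hφy, hφF z1 h1] at he; exact absurd (he.symm ▸ h1) hxF
          · rwa [hφF z1 h1, hφF z2 h2] at he
        · intro w hw
          simp only [Finset.coe_insert, Set.mem_insert_iff, Finset.mem_coe] at hw
          rcases hw with rfl | hw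
          · exact ⟨y, by simp, hφy⟩
          · exact ⟨w, by simp [hw], hφF w hw⟩
      -- the key betweenness preservation
      have hmid : ∀ b ∈ F, ∀ c ∈ F, (sbtw b y c ↔ sbtw b x c) :=
        fun b hb c hc => ⟨key_sbtw haF hyF hxF hysucc hsucc hb hc,
          key_sbtw haF hxF hyF hsucc hysucc hb hc⟩
      have hiso : ∀ p ∈ insert y F, ∀ q ∈ insert y F, ∀ r ∈ insert y F,
          (sbtw p q r ↔ sbtw (φ p) (φ q) (φ r)) := by
        intro p hp q hq r hr
        rcases Finset.mem_insert.1 hp with rfl | hp <;>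
          rcases Finset.mem_insert.1 hq with rfl | hq <;>
          rcases Finset.mem_insert.1 hr with rfl | hr
        · simp [hφy, sbtw_irrefl]
        · rw [hφy, hφF r hr]; simp [sbtw_irrefl_left]
        · rw [hφy, hφF q hq]; simp [sbtw_irrefl_left_right]
        · rw [hφy, hφF q hq, hφF r hr, sbtw_cyclic, sbtw_cyclic (a := x)]
          exact hmid r hr q hq
        · rw [hφy, hφF p hp]; simp [sbtw_irrefl_right]
        · rw [hφy, hφF p hp, hφF r hr]
          exact hmid p hp r hr
        · rw [hφy, hφF p hp, hφF q hq, ← sbtw_cyclic, ← sbtw_cyclic (a := q) (b := x) (c := p)]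
          exact hmid q hq p hp
        · rw [hφF p hp, hφF q hq, hφF r hr]
      obtain ⟨g, hg⟩ := hext (insert y F) (insert x F) φ hbij hiso
      refine ⟨g, ?_, ?_⟩
      · intro t ht
        rw [hg t (Finset.mem_insert_of_mem ht), hφF t ht]
      · rw [hg y (Finset.mem_insert_self _ _), hφy]
end

section
/- Let a group G act ultrahomogeneously on an infinite circularly ordered set X. Then G contains a free subgroup on two generators; that is, there exists an injective group homomorphism from the free group on two generators into G. -/
section Aux

variable {X : Type*} [CircularOrder X]

private lemma sbtw_ne12 {a b c : X} (h : sbtw a b c) : a ≠ b := by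
  rintro rfl; exact sbtw_irrefl_left h

private lemma sbtw_ne23 {a b c : X} (h : sbtw a b c) : b ≠ c := by
  rintro rfl; exact sbtw_irrefl_right h

private lemma sbtw_ne13 {a b c : X} (h : sbtw a b c) : a ≠ c := by
  rintro rfl; exact sbtw_irrefl_left_right h

/-- Drop the base point: if `a` and then `b` and then `c` come after `o`, then `sbtw a b c`. -/
private lemma sbtw_drop {o a b c : X} (h1 : sbtw o a b) (h2 : sbtw o b c) : sbtw a b c :=
  (SBtw.sbtw.trans_left (h2.cyclic_left.cyclic_left) h1).cyclic_left

private lemma btw_cases {p q t : X} (hpq : p ≠ q) (ht : btw p t q) :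
    t = p ∨ t = q ∨ sbtw p t q := by
  by_cases h1 : t = p
  · exact Or.inl h1
  by_cases h2 : t = q
  · exact Or.inr (Or.inl h2)
  refine Or.inr (Or.inr ?_)
  by_contra hs
  have hqt : btw q t p := not_not.1 (fun hn => hs (sbtw_iff_not_btw.2 hn))
  rcases ht.antisymm hqt with h | h | h
  · exact h1 h.symm
  · exact h2 h
  · exact hpq h.symm

/-- Two closed circular intervals in "positive position" are disjoint. -/
private lemma arc_disjoint {p q r s : X} (h1 : sbtw p q r) (h2 : sbtw p r s) :
    Disjoint (Set.cIcc p q) (Set.cIcc r s) := by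
  rw [Set.disjoint_left]
  intro t htpq htrs
  rw [Set.mem_cIcc] at htpq htrs
  have hqrs : sbtw q r s := sbtw_drop h1 h2
  rcases btw_cases (sbtw_ne12 h1) htpq with rfl | rfl | hst
  · exact (h2.cyclic_right).not_btw htrs
  · exact (hqrs.cyclic_right).not_btw htrs
  · have h5 : sbtw p t r := sbtw_trans_right hst h1
    have h6 : sbtw t r s := sbtw_drop h5 h2
    exact (h6.cyclic_left.cyclic_left).not_btw htrs

end Aux

section TwoPt

variable {G X : Type*} [Group G] [CircularOrder X] [MulAction G X]

private lemma two_point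
    (hext : ∀ (A B : Finset X) (φ : X → X), Set.BijOn φ (↑A : Set X) (↑B : Set X) →
      (∀ a ∈ A, ∀ b ∈ A, ∀ c ∈ A, (sbtw a b c ↔ sbtw (φ a) (φ b) (φ c))) →
      ∃ g : G, ∀ a ∈ A, g • a = φ a)
    (p q r s : X) (hpq : p ≠ q) (hrs : r ≠ s) :
    ∃ g : G, g • p = r ∧ g • q = s := by
  classical
  set φ : X → X := fun t => if t = p then r else if t = q then s else t with hφ
  have hφp : φ p = r := by simp [hφ]
  have hφq : φ q = s := by simp [hφ, hpq.symm]
  have hbij : Set.BijOn φ (↑({p, q} : Finset X) : Set X) (↑({r, s} : Finset X) : Set X) := by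
    refine ⟨?_, ?_, ?_⟩
    · intro t ht
      simp only [Finset.coe_insert, Finset.coe_singleton, Set.mem_insert_iff,
        Set.mem_singleton_iff] at ht ⊢
      rcases ht with rfl | rfl
      · exact Or.inl hφp
      · exact Or.inr hφq
    · intro u hu v hv he
      simp only [Finset.coe_insert, Finset.coe_singleton, Set.mem_insert_iff,
        Set.mem_singleton_iff] at hu hv
      rcases hu with rfl | rfl <;> rcases hv with rfl | rfl
      · rfl
      · rw [hφp, hφq] at he; exact absurd he hrs
      · rw [hφp, hφq] at he; exact absurd he.symm hrs
      · rfl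
    · intro t ht
      simp only [Finset.coe_insert, Finset.coe_singleton, Set.mem_insert_iff,
        Set.mem_singleton_iff] at ht
      rcases ht with rfl | rfl
      · exact ⟨p, by simp, hφp⟩
      · exact ⟨q, by simp, hφq⟩
  have hiso : ∀ a ∈ ({p, q} : Finset X), ∀ b ∈ ({p, q} : Finset X), ∀ c ∈ ({p, q} : Finset X),
      (sbtw a b c ↔ sbtw (φ a) (φ b) (φ c)) := by
    intro a ha b hb c hc
    simp only [Finset.mem_insert, Finset.mem_singleton] at ha hb hc
    rcases ha with rfl | rfl <;> rcases hb with rfl | rfl <;> rcases hc with rfl | rfl <;>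
      simp [hφp, hφq, sbtw_irrefl_left, sbtw_irrefl_right, sbtw_irrefl_left_right]
  obtain ⟨g, hg⟩ := hext {p, q} {r, s} φ hbij hiso
  exact ⟨g, by rw [hg p (by simp), hφp], by rw [hg q (by simp), hφq]⟩

end TwoPt

open Pointwise

/-- If a group `G` acts ultrahomogeneously on an infinite circularly ordered set, then `G`
contains a free subgroup on two generators: there is an injective group homomorphism from
the free group on two generators into `G`. -/
theorem stmt11 {G X : Type*} [Group G] [CircularOrder X] [MulAction G X] [Infinite X]
    (h : IsUltrahomogeneous G X) :
    ∃ f : FreeGroup (Fin 2) →* G, Function.Injective f := by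
  classical
  obtain ⟨-, hord, hext⟩ := h
  -- density of the circular order
  have dens : ∀ p q : X, p ≠ q → ∃ x : X, sbtw p x q := by
    intro p q hpq
    by_contra hno
    push_neg at hno
    obtain ⟨c, hc⟩ := Infinite.exists_notMem_finset ({p, q} : Finset X)
    simp only [Finset.mem_insert, Finset.mem_singleton, not_or] at hc
    have hcq : btw q c p := by
      by_contra hb
      exact hno c (sbtw_iff_not_btw.2 hb)
    have hsq : sbtw p q c := by
      rcases btw_cases hpq.symm hcq with h1 | h1 | h1
      · exact absurd h1 hc.2
      · exact absurd h1 hc.1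
      · exact h1.cyclic_right
    obtain ⟨g, hg1, hg2⟩ := two_point hext p c p q (Ne.symm hc.1) hpq
    have := hord g p q c hsq
    rw [hg1, hg2] at this
    exact hno (g • q) this
  -- pick eight points in cyclic order
  obtain ⟨x1, x8, hx18⟩ := exists_pair_ne X
  obtain ⟨x7, F78⟩ := dens x1 x8 hx18
  obtain ⟨x6, F67⟩ := dens x1 x7 (sbtw_ne12 F78)
  obtain ⟨x5, F56⟩ := dens x1 x6 (sbtw_ne12 F67)
  obtain ⟨x4, F45⟩ := dens x1 x5 (sbtw_ne12 F56)
  obtain ⟨x3, F34⟩ := dens x1 x4 (sbtw_ne12 F45)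
  obtain ⟨x2, F23⟩ := dens x1 x3 (sbtw_ne12 F34)
  -- fan facts
  have F24 : sbtw x1 x2 x4 := sbtw_trans_right F23 F34
  have F25 : sbtw x1 x2 x5 := sbtw_trans_right F24 F45
  have F26 : sbtw x1 x2 x6 := sbtw_trans_right F25 F56
  have F27 : sbtw x1 x2 x7 := sbtw_trans_right F26 F67
  have F35 : sbtw x1 x3 x5 := sbtw_trans_right F34 F45
  have F36 : sbtw x1 x3 x6 := sbtw_trans_right F35 F56
  have F37 : sbtw x1 x3 x7 := sbtw_trans_right F36 F67
  have F57 : sbtw x1 x5 x7 := sbtw_trans_right F56 F67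
  -- triples not through x1
  have T345 : sbtw x3 x4 x5 := sbtw_drop F34 F45
  have T356 : sbtw x3 x5 x6 := sbtw_drop F35 F56
  have T347 : sbtw x3 x4 x7 := sbtw_drop F34 (sbtw_trans_right F45 F57)
  have T378 : sbtw x3 x7 x8 := sbtw_drop F37 F78
  have T567 : sbtw x5 x6 x7 := sbtw_drop F56 F67
  have T578 : sbtw x5 x7 x8 := sbtw_drop F57 F78
  -- the generators
  obtain ⟨a, ha2, ha1⟩ :=
    two_point hext x2 x1 x3 x4 (sbtw_ne12 F23).symm (sbtw_ne23 F34)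
  obtain ⟨b, hb6, hb5⟩ :=
    two_point hext x6 x5 x7 x8 (sbtw_ne23 F56).symm (sbtw_ne23 F78)
  -- ping-pong sets
  have d1 : Disjoint (Set.cIcc x3 x4) (Set.cIcc x7 x8) := arc_disjoint T347 T378
  have d2 : Disjoint (Set.cIcc x1 x2) (Set.cIcc x5 x6) := arc_disjoint F25 F56
  have hXnonempty : ∀ i : Fin 2, ((![Set.cIcc x3 x4, Set.cIcc x7 x8] : Fin 2 → Set X) i).Nonempty := by
    intro i
    fin_cases i
    · exact ⟨x3, Set.left_mem_cIcc x3 x4⟩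
    · exact ⟨x7, Set.left_mem_cIcc x7 x8⟩
  have hXdisj : Pairwise (Function.onFun Disjoint (![Set.cIcc x3 x4, Set.cIcc x7 x8] : Fin 2 → Set X)) := by
    intro i j hij
    fin_cases i <;> fin_cases j <;>
      first
        | exact absurd rfl hij
        | exact d1
        | exact d1.symm
  have hYdisj : Pairwise (Function.onFun Disjoint (![Set.cIcc x1 x2, Set.cIcc x5 x6] : Fin 2 → Set X)) := by
    intro i j hij
    fin_cases i <;> fin_cases j <;>
      first
        | exact absurd rfl hij
        | exact d2
        | exact d2.symm
  have hXYdisj : ∀ i j : Fin 2, Disjoint ((![Set.cIcc x3 x4, Set.cIcc x7 x8] : Fin 2 → Set X) i)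
      ((![Set.cIcc x1 x2, Set.cIcc x5 x6] : Fin 2 → Set X) j) := by
    intro i j
    fin_cases i <;> fin_cases j
    · exact (arc_disjoint F23 F34).symm
    · exact arc_disjoint T345 T356
    · exact (arc_disjoint F27 F78).symm
    · exact (arc_disjoint T567 T578).symm
  have hX : ∀ i : Fin 2, (![a, b] : Fin 2 → G) i •
      (((![Set.cIcc x1 x2, Set.cIcc x5 x6] : Fin 2 → Set X) i)ᶜ) ⊆
      (![Set.cIcc x3 x4, Set.cIcc x7 x8] : Fin 2 → Set X) i := by
    intro i
    fin_cases i
    · show a • (Set.cIcc x1 x2)ᶜ ⊆ Set.cIcc x3 x4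
      rw [Set.compl_cIcc]
      rintro t ⟨y, hy, rfl⟩
      rw [Set.mem_cIoo] at hy
      have := hord a x2 y x1 hy
      rw [ha2, ha1] at this
      exact this.btw
    · show b • (Set.cIcc x5 x6)ᶜ ⊆ Set.cIcc x7 x8
      rw [Set.compl_cIcc]
      rintro t ⟨y, hy, rfl⟩
      rw [Set.mem_cIoo] at hy
      have := hord b x6 y x5 hy
      rw [hb6, hb5] at this
      exact this.btw
  have hY : ∀ i : Fin 2, (![a, b] : Fin 2 → G)⁻¹ i •
      (((![Set.cIcc x3 x4, Set.cIcc x7 x8] : Fin 2 → Set X) i)ᶜ) ⊆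
      (![Set.cIcc x1 x2, Set.cIcc x5 x6] : Fin 2 → Set X) i := by
    intro i
    fin_cases i
    · show a⁻¹ • (Set.cIcc x3 x4)ᶜ ⊆ Set.cIcc x1 x2
      rw [Set.compl_cIcc]
      rintro t ⟨y, hy, rfl⟩
      rw [Set.mem_cIoo] at hy
      rw [Set.mem_cIcc]
      by_contra hb
      have hs : sbtw x2 (a⁻¹ • y) x1 := sbtw_iff_not_btw.2 hb
      have := hord a x2 (a⁻¹ • y) x1 hs
      rw [ha2, ha1, smul_inv_smul] at this
      exact this.not_sbtw hy
    · show b⁻¹ • (Set.cIcc x7 x8)ᶜ ⊆ Set.cIcc x5 x6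
      rw [Set.compl_cIcc]
      rintro t ⟨y, hy, rfl⟩
      rw [Set.mem_cIoo] at hy
      rw [Set.mem_cIcc]
      by_contra hb
      have hs : sbtw x6 (b⁻¹ • y) x5 := sbtw_iff_not_btw.2 hb
      have := hord b x6 (b⁻¹ • y) x5 hs
      rw [hb6, hb5, smul_inv_smul] at this
      exact this.not_sbtw hy
  have key := FreeGroup.injective_lift_of_ping_pong
      (ι := ULift (Fin 2))
      (fun i => (![a, b] : Fin 2 → G) i.down)
      (fun i => (![Set.cIcc x3 x4, Set.cIcc x7 x8] : Fin 2 → Set X) i.down)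
      (fun i => (![Set.cIcc x1 x2, Set.cIcc x5 x6] : Fin 2 → Set X) i.down)
      (fun i => hXnonempty i.down)
      (fun i j hij => hXdisj fun hd => hij (ULift.down_injective hd))
      (fun i j hij => hYdisj fun hd => hij (ULift.down_injective hd))
      (fun i j => hXYdisj i.down j.down)
      (fun i => hX i.down)
      (fun i => hY i.down)
  refine ⟨(FreeGroup.lift fun i : ULift (Fin 2) => (![a, b] : Fin 2 → G) i.down).comp
      (FreeGroup.freeGroupCongr Equiv.ulift.symm).toMonoidHom, ?_⟩
  rw [MonoidHom.coe_comp]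
  simp only [MulEquiv.coe_toMonoidHom]
  exact key.comp (FreeGroup.freeGroupCongr Equiv.ulift.symm).injective
end
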